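/- For every μ > 0 and every ε ≥ 0, the function δ(ε) = Φ(−ε/μ + μ/2) − e^ε·Φ(−ε/μ − μ/2) satisfies 0 ≤ δ(ε) ≤ 1, and δ is non-increasing in ε with δ(ε) → 0 as ε → ∞. -/

import Mathlib

open MeasureTheory ProbabilityTheory Real Set

/-- Standard normal CDF. -/
noncomputable def Phi (x : ℝ) : ℝ := ((gaussianReal 0 1) (Set.Iic x)).toReal

/-- Inverse of the standard normal CDF (on (0,1)). -/
noncomputable def PhiInv (p : ℝ) : ℝ := sInf {x : ℝ | p ≤ Phi x}

/-- Gaussian tradeoff function `G_μ`, extended by `G_μ(0)=1`, `G_μ(1)=0`. -/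
noncomputable def Gmu (μ α : ℝ) : ℝ :=
  if α ≤ 0 then 1 else if 1 ≤ α then 0 else Phi (PhiInv (1 - α) - μ)

/-- Optimal hypothesis-testing tradeoff function: minimal type-II error over
randomized tests with type-I error at most `α`. -/
noncomputable def tradeoff {Ω : Type*} [MeasurableSpace Ω] (P Q : Measure Ω) (α : ℝ) : ℝ :=
  sInf { b : ℝ | ∃ φ : Ω → ℝ, Measurable φ ∧ (∀ ω, φ ω ∈ Set.Icc (0:ℝ) 1) ∧
    (∫ ω, φ ω ∂P) ≤ α ∧ b = 1 - ∫ ω, φ ω ∂Q }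

/-- Rényi divergence of order `a > 1`. -/
noncomputable def renyiDiv {Ω : Type*} [MeasurableSpace Ω] (a : ℝ) (P Q : Measure Ω) : ℝ :=
  (a - 1)⁻¹ * Real.log (∫ ω, ((Measure.rnDeriv P Q ω).toReal) ^ a ∂Q)

/-- `(ε,δ)`-differential privacy. -/
def IsDP {X Ω : Type*} [MeasurableSpace Ω] (M : X → Measure Ω) (Neighbor : X → X → Prop)
    (ε δ : ℝ) : Prop :=
  ∀ x x', Neighbor x x' → ∀ S : Set Ω, MeasurableSet S →
    ((M x) S).toReal ≤ Real.exp ε * ((M x') S).toReal + δ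

/-- `ρ`-zero-concentrated differential privacy. -/
def IsZCDP {X Ω : Type*} [MeasurableSpace Ω] (M : X → Measure Ω) (Neighbor : X → X → Prop)
    (ρ : ℝ) : Prop :=
  ∀ x x', Neighbor x x' → ∀ a : ℝ, 1 < a → renyiDiv a (M x) (M x') ≤ ρ * a

/-- `μ`-Gaussian differential privacy. -/
def IsGDP {X Ω : Type*} [MeasurableSpace Ω] (M : X → Measure Ω) (Neighbor : X → X → Prop)
    (μ : ℝ) : Prop :=
  ∀ x x', Neighbor x x' → ∀ α ∈ Set.Icc (0:ℝ) 1, Gmu μ α ≤ tradeoff (M x) (M x') α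

/-! Let `p, q` be the densities of `P = N(0,1)` and `Q = N(μ,1)`. The likelihood ratio
`q/p (t) = exp (μ t - μ²/2)` is increasing, so `p - e^ε q ≥ 0` exactly on `t ≤ a := -ε/μ + μ/2`.
Hence `δ(ε) = P(-∞, a] - e^ε Q(-∞, a] = ∫ (p - e^ε q)⁺` (the hockey-stick divergence), which is
nonnegative and non-increasing in `ε` because its integrand is. Finally `0 ≤ δ(ε) ≤ Φ(a)`, and
`Φ(a) → 0` as `ε → ∞`. -/

lemma Phi_eq_cdf : Phi = cdf (gaussianReal 0 1) := by
  ext x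
  rw [cdf_eq_real, measureReal_def, Phi]

lemma Phi_nonneg (x : ℝ) : 0 ≤ Phi x := Phi_eq_cdf ▸ cdf_nonneg _ x

lemma Phi_le_one (x : ℝ) : Phi x ≤ 1 := Phi_eq_cdf ▸ cdf_le_one _ x

lemma tendsto_Phi_atBot : Filter.Tendsto Phi Filter.atBot (nhds 0) :=
  Phi_eq_cdf ▸ tendsto_cdf_atBot _

lemma Phi_sub_eq_setIntegral (m x : ℝ) :
    Phi (x - m) = ∫ t in Iic x, gaussianPDFReal m 1 t := by
  have hpre : (· + m) ⁻¹' Iic x = Iic (x - m) := by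
    ext t
    simp [le_sub_iff_add_le]
  rw [Phi, ← hpre, ← Measure.map_apply (measurable_add_const m) measurableSet_Iic,
    gaussianReal_map_add_const, zero_add, gaussianReal_apply_eq_integral m one_ne_zero,
    ENNReal.toReal_ofReal (setIntegral_nonneg measurableSet_Iic
      fun t _ => gaussianPDFReal_nonneg m 1 t)]

lemma gaussianPDFReal_eq_mul_exp (m t : ℝ) :
    gaussianPDFReal m 1 t = gaussianPDFReal 0 1 t * exp (m * t - m ^ 2 / 2) := by
  simp only [gaussianPDFReal, NNReal.coe_one, mul_one, sub_zero, mul_assoc, ← exp_add]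
  ring_nf

noncomputable def hockeyStickIntegrand (μ ε t : ℝ) : ℝ :=
  gaussianPDFReal 0 1 t - exp ε * gaussianPDFReal μ 1 t

lemma integrable_hockeyStickIntegrand (μ ε : ℝ) : Integrable (hockeyStickIntegrand μ ε) :=
  (integrable_gaussianPDFReal 0 1).sub ((integrable_gaussianPDFReal μ 1).const_mul _)

lemma hockeyStickIntegrand_antitone (μ t : ℝ) : Antitone (hockeyStickIntegrand μ · t) :=
  fun _ _ h => sub_le_sub_left
    (mul_le_mul_of_nonneg_right (exp_le_exp.2 h) (gaussianPDFReal_nonneg μ 1 t)) _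

lemma hockeyStickIntegrand_nonneg_iff {μ : ℝ} (hμ : 0 < μ) (ε t : ℝ) :
    0 ≤ hockeyStickIntegrand μ ε t ↔ t ≤ -ε / μ + μ / 2 := by
  have hthreshold : -ε / μ + μ / 2 = (μ ^ 2 / 2 - ε) / μ := by field_simp; ring
  rw [hockeyStickIntegrand, gaussianPDFReal_eq_mul_exp μ, sub_nonneg, mul_left_comm, ← exp_add,
    mul_le_iff_le_one_right (gaussianPDFReal_pos 0 1 t one_ne_zero), exp_le_one_iff,
    hthreshold, le_div_iff₀ hμ]
  constructor <;> intro h <;> linarith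

lemma max_hockeyStickIntegrand_eq_indicator {μ : ℝ} (hμ : 0 < μ) (ε : ℝ) :
    (fun t => max (hockeyStickIntegrand μ ε t) 0) =
      (Iic (-ε / μ + μ / 2)).indicator (hockeyStickIntegrand μ ε) := by
  funext t
  by_cases ht : t ∈ Iic (-ε / μ + μ / 2)
  · rw [indicator_of_mem ht, max_eq_left ((hockeyStickIntegrand_nonneg_iff hμ ε t).2 ht)]
  · rw [indicator_of_notMem ht,
      max_eq_right (le_of_not_ge (mt (hockeyStickIntegrand_nonneg_iff hμ ε t).1 ht))]

lemma delta_eq_integral_max {μ : ℝ} (hμ : 0 < μ) (ε : ℝ) :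
    Phi (-ε / μ + μ / 2) - exp ε * Phi (-ε / μ - μ / 2) =
      ∫ t, max (hockeyStickIntegrand μ ε t) 0 := by
  have hshift : -ε / μ - μ / 2 = (-ε / μ + μ / 2) - μ := by ring
  rw [max_hockeyStickIntegrand_eq_indicator hμ, integral_indicator measurableSet_Iic]
  unfold hockeyStickIntegrand
  rw [integral_sub (integrable_gaussianPDFReal 0 1).restrict
      ((integrable_gaussianPDFReal μ 1).restrict.const_mul _), integral_const_mul,
    ← Phi_sub_eq_setIntegral, ← Phi_sub_eq_setIntegral, sub_zero, hshift]

/-- The `(ε,δ)`-curve of a `μ`-GDP mechanism: `δ(ε) ∈ [0,1]`, `δ` is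
non-increasing on `[0,∞)`, and `δ(ε) → 0` as `ε → ∞`. -/
theorem delta_curve_properties (μ : ℝ) (hμ : 0 < μ) :
    (∀ ε : ℝ, 0 ≤ ε →
      0 ≤ Phi (-ε / μ + μ / 2) - Real.exp ε * Phi (-ε / μ - μ / 2) ∧
      Phi (-ε / μ + μ / 2) - Real.exp ε * Phi (-ε / μ - μ / 2) ≤ 1) ∧
    AntitoneOn (fun ε : ℝ => Phi (-ε / μ + μ / 2) - Real.exp ε * Phi (-ε / μ - μ / 2))
      (Set.Ici 0) ∧
    Filter.Tendsto (fun ε : ℝ => Phi (-ε / μ + μ / 2) - Real.exp ε * Phi (-ε / μ - μ / 2))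
      Filter.atTop (nhds 0) := by
  have hδ := delta_eq_integral_max hμ
  have hnonneg (ε : ℝ) : 0 ≤ Phi (-ε / μ + μ / 2) - exp ε * Phi (-ε / μ - μ / 2) :=
    (hδ ε).symm ▸ integral_nonneg fun t => le_max_right _ _
  have hle (ε : ℝ) : Phi (-ε / μ + μ / 2) - exp ε * Phi (-ε / μ - μ / 2) ≤ Phi (-ε / μ + μ / 2) :=
    sub_le_self _ (mul_nonneg (exp_nonneg ε) (Phi_nonneg _))
  refine ⟨fun ε _ => ⟨hnonneg ε, (hle ε).trans (Phi_le_one _)⟩, fun ε₁ _ ε₂ _ h => ?_, ?_⟩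
  · dsimp only
    rw [hδ, hδ]
    exact integral_mono (integrable_hockeyStickIntegrand μ ε₂).pos_part
      (integrable_hockeyStickIntegrand μ ε₁).pos_part
      fun t => max_le_max (hockeyStickIntegrand_antitone μ t h) le_rfl
  · have hthreshold : Filter.Tendsto (fun ε : ℝ => -ε / μ + μ / 2) Filter.atTop Filter.atBot :=
      Filter.tendsto_atBot_add_const_right _ _
        (Filter.tendsto_neg_atTop_atBot.atBot_div_const hμ)
    exact tendsto_of_tendsto_of_tendsto_of_le_of_le tendsto_const_nhds
      (tendsto_Phi_atBot.comp hthreshold) hnonneg hle
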